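/- arXiv:quant-ph/0306122 — 2 statements merged into one kernel-verified Lean document; each statement's English description precedes it below -/
import Mathlib

section
/- For every matrix M ∈ K and every (u,v,w) ∈ ℂ³, one has C₆(M·(u,v,w)) = C₆(u,v,w), C₉(M·(u,v,w)) = C₉(u,v,w), and C₁₂(M·(u,v,w)) = C₁₂(u,v,w); that is, C₆, C₉, C₁₂ are K-invariant polynomials. -/
open Matrix Complex

noncomputable section

def ε : ℂ := Complex.exp (2 * Real.pi * Complex.I / 3)

lemma hε : IsPrimitiveRoot ε 3 := by
  have := Complex.isPrimitiveRoot_exp 3 (by norm_num)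
  simpa [ε] using this

lemma hε3 : ε ^ 3 = 1 := hε.pow_eq_one

lemma hεne0 : ε ≠ 0 := by
  intro h
  have := hε3
  rw [h] at this
  simp at this

lemma hεne1 : ε ≠ 1 := hε.ne_one (by norm_num)

def matA : Matrix (Fin 3) (Fin 3) ℂ := !![0,1,0; 0,0,1; 1,0,0]
def matB : Matrix (Fin 3) (Fin 3) ℂ := !![1,0,0; 0,0,1; 0,1,0]
def matC : Matrix (Fin 3) (Fin 3) ℂ := !![1,0,0; 0,ε,0; 0,0,ε^2]
def matD : Matrix (Fin 3) (Fin 3) ℂ := !![1,0,0; 0,ε,0; 0,0,ε]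
def matE : Matrix (Fin 3) (Fin 3) ℂ :=
  (Complex.I * Real.sqrt 3)⁻¹ • !![1,1,1; 1,ε,ε^2; 1,ε^2,ε]

lemma detA : matA.det ≠ 0 := by
  simp [matA, Matrix.det_fin_three]

lemma detC : matC.det ≠ 0 := by
  simp [matC, Matrix.det_fin_three]
  exact fun h => hεne0 h

lemma detD : matD.det ≠ 0 := by
  simp [matD, Matrix.det_fin_three]
  exact fun h => hεne0 h

lemma detE : matE.det ≠ 0 := by
  have h1 : (!![1,1,1; 1,ε,ε^2; 1,ε^2,ε] : Matrix (Fin 3) (Fin 3) ℂ).det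
      = 3 * ε * (ε - 1) := by
    have h4 : ε ^ 4 = ε := by
      calc ε ^ 4 = ε ^ 3 * ε := by ring
      _ = ε := by rw [hε3]; ring
    simp [Matrix.det_fin_three, Matrix.vecHead, Matrix.vecTail]
    linear_combination (-1 : ℂ) * h4
  have h2 : (Complex.I * (Real.sqrt 3 : ℂ)) ≠ 0 :=
    mul_ne_zero Complex.I_ne_zero
      (by exact_mod_cast (Real.sqrt_pos.mpr (by norm_num : (0:ℝ) < 3)).ne')
  rw [matE, Matrix.det_smul, h1]
  apply mul_ne_zero
  · apply pow_ne_zero; exact inv_ne_zero h2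
  · apply mul_ne_zero (mul_ne_zero (by norm_num) hεne0)
    exact sub_ne_zero.mpr hεne1

def genA : GL (Fin 3) ℂ := Matrix.GeneralLinearGroup.mkOfDetNeZero matA detA
def genB : GL (Fin 3) ℂ := Matrix.GeneralLinearGroup.mkOfDetNeZero matB (by simp [matB, Matrix.det_fin_three])
def genC : GL (Fin 3) ℂ := Matrix.GeneralLinearGroup.mkOfDetNeZero matC detC
def genD : GL (Fin 3) ℂ := Matrix.GeneralLinearGroup.mkOfDetNeZero matD detD
def genE : GL (Fin 3) ℂ := Matrix.GeneralLinearGroup.mkOfDetNeZero matE detE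

def K : Subgroup (GL (Fin 3) ℂ) := Subgroup.closure {genA, genC, genD, genE}

def C6 (u v w : ℂ) : ℂ :=
  u ^ 6 + v ^ 6 + w ^ 6 - 10 * (u ^ 3 * v ^ 3 + u ^ 3 * w ^ 3 + v ^ 3 * w ^ 3)

def C9 (u v w : ℂ) : ℂ := (u ^ 3 - v ^ 3) * (u ^ 3 - w ^ 3) * (v ^ 3 - w ^ 3)

def C12 (u v w : ℂ) : ℂ :=
  (u ^ 12 + v ^ 12 + w ^ 12)
    + 4 * (u ^ 9 * v ^ 3 + u ^ 9 * w ^ 3 + v ^ 9 * u ^ 3 + v ^ 9 * w ^ 3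
        + w ^ 9 * u ^ 3 + w ^ 9 * v ^ 3)
    + 6 * (u ^ 6 * v ^ 6 + u ^ 6 * w ^ 6 + v ^ 6 * w ^ 6)
    + 228 * (u ^ 6 * v ^ 3 * w ^ 3 + v ^ 6 * u ^ 3 * w ^ 3 + w ^ 6 * u ^ 3 * v ^ 3)


/-!
All three polynomials are functions of the cubes `u³, v³, w³` (`C₆`, `C₁₂` symmetric, `C₉` the
Vandermonde), so they are fixed by `A`, `C` and `D`. For `E`, write `E = (2ε + 1)⁻¹ F` with `F`
the discrete Fourier matrix (`i√3 = 2ε + 1`). The cubes of the entries of `F (u, v, w)` are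
`P + Q + S`, `P + εQ + ε²S`, `P + ε²Q + εS` with `P = Σ u³ + 6uvw` and `Q`, `S` three times the
two cyclic sums `Σ u²v`, `Σ uv²`; their elementary symmetric functions and Vandermonde product
are explicit in `P, Q, S`, and give `Cₖ ∘ F = (2ε + 1)ᵏ Cₖ`, since `(2ε + 1)² = -3`.
-/

section CubeRoots

variable {R : Type*} [CommRing R]

theorem cube_add_mul_add_mul {ζ ξ : R} (hζξ : ζ * ξ = 1) (hζ : ζ ^ 2 = ξ) (hξ : ξ ^ 2 = ζ)
    (u v w : R) :
    (u + ζ * v + ξ * w) ^ 3 = (u ^ 3 + v ^ 3 + w ^ 3 + 6 * u * v * w)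
      + ζ * (3 * (u ^ 2 * v + v ^ 2 * w + w ^ 2 * u))
      + ξ * (3 * (u * v ^ 2 + v * w ^ 2 + w * u ^ 2)) := by
  linear_combination (v ^ 3 + w ^ 3 + 6 * u * v * w) * hζξ
    + (ζ * v ^ 3 + 3 * u * v ^ 2 + 3 * ξ * v ^ 2 * w + 3 * v * w ^ 2) * hζ
    + (ξ * w ^ 3 + 3 * u * w ^ 2 + 3 * v ^ 2 * w + 3 * ζ * v * w ^ 2) * hξ

variable {ω : R} (h : ω ^ 2 + ω + 1 = 0)
include h

theorem two_mul_add_one_sq_of_sq_add_add_one : (2 * ω + 1) ^ 2 = -3 := by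
  linear_combination 4 * h

theorem apply_dft_cubes (f : R → R → R → R) (u v w : R) :
    f ((u + v + w) ^ 3) ((u + ω * v + ω ^ 2 * w) ^ 3) ((u + ω ^ 2 * v + ω * w) ^ 3)
      = f ((u ^ 3 + v ^ 3 + w ^ 3 + 6 * u * v * w) + 3 * (u ^ 2 * v + v ^ 2 * w + w ^ 2 * u)
            + 3 * (u * v ^ 2 + v * w ^ 2 + w * u ^ 2))
          ((u ^ 3 + v ^ 3 + w ^ 3 + 6 * u * v * w) + ω * (3 * (u ^ 2 * v + v ^ 2 * w + w ^ 2 * u))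
            + ω ^ 2 * (3 * (u * v ^ 2 + v * w ^ 2 + w * u ^ 2)))
          ((u ^ 3 + v ^ 3 + w ^ 3 + 6 * u * v * w)
            + ω ^ 2 * (3 * (u ^ 2 * v + v ^ 2 * w + w ^ 2 * u))
            + ω * (3 * (u * v ^ 2 + v * w ^ 2 + w * u ^ 2))) := by
  have h3 : ω * ω ^ 2 = 1 := by linear_combination (ω - 1) * h
  have h4 : (ω ^ 2) ^ 2 = ω := by linear_combination (ω ^ 2 - ω) * h
  rw [cube_add_mul_add_mul h3 rfl h4, cube_add_mul_add_mul ((mul_comm _ _).trans h3) h4 rfl]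
  congr 2
  ring

variable (P Q S : R)

theorem dft_sum :
    (P + Q + S) + (P + ω * Q + ω ^ 2 * S) + (P + ω ^ 2 * Q + ω * S) = 3 * P := by
  linear_combination (Q + S) * h

theorem dft_esymm2 :
    (P + Q + S) * (P + ω * Q + ω ^ 2 * S) + (P + Q + S) * (P + ω ^ 2 * Q + ω * S)
      + (P + ω * Q + ω ^ 2 * S) * (P + ω ^ 2 * Q + ω * S) = 3 * (P ^ 2 - Q * S) := by
  grind

theorem dft_prod :
    (P + Q + S) * (P + ω * Q + ω ^ 2 * S) * (P + ω ^ 2 * Q + ω * S)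
      = P ^ 3 + Q ^ 3 + S ^ 3 - 3 * P * Q * S := by
  grind

theorem dft_vandermonde :
    ((P + Q + S) - (P + ω * Q + ω ^ 2 * S)) * ((P + Q + S) - (P + ω ^ 2 * Q + ω * S))
      * ((P + ω * Q + ω ^ 2 * S) - (P + ω ^ 2 * Q + ω * S))
      = 3 * (2 * ω + 1) * (Q ^ 3 - S ^ 3) := by
  grind

end CubeRoots

def Q6 (X Y Z : ℂ) : ℂ := (X + Y + Z) ^ 2 - 12 * (X * Y + X * Z + Y * Z)

def Q9 (X Y Z : ℂ) : ℂ := (X - Y) * (X - Z) * (Y - Z)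

def Q12 (X Y Z : ℂ) : ℂ := (X + Y + Z) ^ 4 + 216 * (X + Y + Z) * (X * Y * Z)

theorem C6_eq_Q6 (u v w : ℂ) : C6 u v w = Q6 (u ^ 3) (v ^ 3) (w ^ 3) := by
  unfold C6 Q6; ring

theorem C9_eq_Q9 (u v w : ℂ) : C9 u v w = Q9 (u ^ 3) (v ^ 3) (w ^ 3) := rfl

theorem C12_eq_Q12 (u v w : ℂ) : C12 u v w = Q12 (u ^ 3) (v ^ 3) (w ^ 3) := by
  unfold C12 Q12; ring

section DFT

variable {ω : ℂ} (h : ω ^ 2 + ω + 1 = 0) (u v w : ℂ)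
include h

theorem C6_dft :
    C6 (u + v + w) (u + ω * v + ω ^ 2 * w) (u + ω ^ 2 * v + ω * w) = -27 * C6 u v w := by
  rw [C6_eq_Q6, apply_dft_cubes h Q6, Q6, dft_sum h, dft_esymm2 h]
  unfold C6; ring

theorem C9_dft :
    C9 (u + v + w) (u + ω * v + ω ^ 2 * w) (u + ω ^ 2 * v + ω * w)
      = 81 * (2 * ω + 1) * C9 u v w := by
  rw [C9_eq_Q9, apply_dft_cubes h Q9, Q9, dft_vandermonde h]
  unfold C9; ring

theorem C12_dft :
    C12 (u + v + w) (u + ω * v + ω ^ 2 * w) (u + ω ^ 2 * v + ω * w) = 729 * C12 u v w := by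
  rw [C12_eq_Q12, apply_dft_cubes h Q12, Q12, dft_sum h, dft_prod h]
  unfold C12; ring

end DFT

theorem ε_sq_add_ε_add_one : ε ^ 2 + ε + 1 = 0 := by
  have h := hε.geom_sum_eq_zero (by norm_num)
  simp only [Finset.sum_range_succ, Finset.sum_range_zero, pow_zero, pow_one] at h
  linear_combination h

theorem two_mul_ε_add_one : 2 * ε + 1 = I * Real.sqrt 3 := by
  have hangle : 2 * Real.pi / 3 = Real.pi - Real.pi / 3 := by ring
  have hcos : Real.cos (2 * Real.pi / 3) = -(1 / 2) := by
    rw [hangle, Real.cos_pi_sub, Real.cos_pi_div_three]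
  have hsin : Real.sin (2 * Real.pi / 3) = Real.sqrt 3 / 2 := by
    rw [hangle, Real.sin_pi_sub, Real.sin_pi_div_three]
  rw [ε, show 2 * (Real.pi : ℂ) * I / 3 = ((2 * Real.pi / 3 : ℝ) : ℂ) * I by push_cast; ring,
    exp_mul_I, ← ofReal_cos, ← ofReal_sin, hcos, hsin]
  push_cast; ring

theorem genA_mulVec (x : Fin 3 → ℂ) : genA.val *ᵥ x = ![x 1, x 2, x 0] := by
  ext i; fin_cases i <;> simp [genA, matA, mulVec, dotProduct, Fin.sum_univ_three]

theorem genC_mulVec (x : Fin 3 → ℂ) : genC.val *ᵥ x = ![x 0, ε * x 1, ε ^ 2 * x 2] := by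
  ext i; fin_cases i <;> simp [genC, matC, mulVec, dotProduct, Fin.sum_univ_three]

theorem genD_mulVec (x : Fin 3 → ℂ) : genD.val *ᵥ x = ![x 0, ε * x 1, ε * x 2] := by
  ext i; fin_cases i <;> simp [genD, matD, mulVec, dotProduct, Fin.sum_univ_three]

theorem genE_mulVec (x : Fin 3 → ℂ) :
    genE.val *ᵥ x = (2 * ε + 1)⁻¹ •
      ![x 0 + x 1 + x 2, x 0 + ε * x 1 + ε ^ 2 * x 2, x 0 + ε ^ 2 * x 1 + ε * x 2] := by
  rw [two_mul_ε_add_one]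
  ext i; fin_cases i <;> simp [genE, matE, mulVec, dotProduct, Fin.sum_univ_three] <;> ring

def invariantGroup {n R S : Type*} [Fintype n] [DecidableEq n] [CommRing R]
    (f : (n → R) → S) : Subgroup (GL n R) where
  carrier := {g | ∀ x, f (g.val *ᵥ x) = f x}
  one_mem' := by simp
  mul_mem' {g h} hg hh x := by
    rw [Units.val_mul, ← mulVec_mulVec, hg, hh]
  inv_mem' {g} hg x := by
    rw [← hg, mulVec_mulVec, ← Units.val_mul, mul_inv_cancel, Units.val_one, one_mulVec]

theorem K_le_invariantGroup {f g : ℂ → ℂ → ℂ → ℂ}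
    (cubes : ∀ u v w, f u v w = g (u ^ 3) (v ^ 3) (w ^ 3))
    (cyclic : ∀ u v w, f v w u = f u v w)
    (dft : ∀ u v w, f ((2 * ε + 1)⁻¹ * (u + v + w)) ((2 * ε + 1)⁻¹ * (u + ε * v + ε ^ 2 * w))
      ((2 * ε + 1)⁻¹ * (u + ε ^ 2 * v + ε * w)) = f u v w) :
    K ≤ invariantGroup fun x => f (x 0) (x 1) (x 2) := by
  rw [K, Subgroup.closure_le]
  rintro _ (rfl | rfl | rfl | rfl) x
  · simp [genA_mulVec, cyclic]
  · have hε6 : (ε ^ 2) ^ 3 = 1 := by rw [← pow_mul, mul_comm, pow_mul, hε3, one_pow]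
    simp [genC_mulVec, cubes, mul_pow, hε3, hε6]
  · simp [genD_mulVec, cubes, mul_pow, hε3]
  · simp [genE_mulVec, dft]

theorem C6_cyclic (u v w : ℂ) : C6 v w u = C6 u v w := by unfold C6; ring

theorem C9_cyclic (u v w : ℂ) : C9 v w u = C9 u v w := by unfold C9; ring

theorem C12_cyclic (u v w : ℂ) : C12 v w u = C12 u v w := by unfold C12; ring

theorem C6_mul (s u v w : ℂ) : C6 (s * u) (s * v) (s * w) = s ^ 6 * C6 u v w := by
  unfold C6; ring

theorem C9_mul (s u v w : ℂ) : C9 (s * u) (s * v) (s * w) = s ^ 9 * C9 u v w := by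
  unfold C9; ring

theorem C12_mul (s u v w : ℂ) : C12 (s * u) (s * v) (s * w) = s ^ 12 * C12 u v w := by
  unfold C12; ring

section NormalizedDFT

variable (u v w : ℂ)

theorem C6_normalized_dft :
    C6 ((2 * ε + 1)⁻¹ * (u + v + w)) ((2 * ε + 1)⁻¹ * (u + ε * v + ε ^ 2 * w))
      ((2 * ε + 1)⁻¹ * (u + ε ^ 2 * v + ε * w)) = C6 u v w := by
  have h := two_mul_add_one_sq_of_sq_add_add_one ε_sq_add_ε_add_one
  rw [C6_mul, C6_dft ε_sq_add_ε_add_one, ← mul_assoc, inv_pow,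
    show (2 * ε + 1) ^ 6 = ((2 * ε + 1) ^ 2) ^ 3 by ring, h]
  norm_num

theorem C9_normalized_dft :
    C9 ((2 * ε + 1)⁻¹ * (u + v + w)) ((2 * ε + 1)⁻¹ * (u + ε * v + ε ^ 2 * w))
      ((2 * ε + 1)⁻¹ * (u + ε ^ 2 * v + ε * w)) = C9 u v w := by
  have h := two_mul_add_one_sq_of_sq_add_add_one ε_sq_add_ε_add_one
  have hne : 2 * ε + 1 ≠ 0 := fun h0 => by simp [h0] at h
  rw [C9_mul, C9_dft ε_sq_add_ε_add_one, ← mul_assoc, inv_pow,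
    show (2 * ε + 1) ^ 9 = ((2 * ε + 1) ^ 2) ^ 4 * (2 * ε + 1) by ring, h]
  field_simp
  norm_num

theorem C12_normalized_dft :
    C12 ((2 * ε + 1)⁻¹ * (u + v + w)) ((2 * ε + 1)⁻¹ * (u + ε * v + ε ^ 2 * w))
      ((2 * ε + 1)⁻¹ * (u + ε ^ 2 * v + ε * w)) = C12 u v w := by
  have h := two_mul_add_one_sq_of_sq_add_add_one ε_sq_add_ε_add_one
  rw [C12_mul, C12_dft ε_sq_add_ε_add_one, ← mul_assoc, inv_pow,
    show (2 * ε + 1) ^ 12 = ((2 * ε + 1) ^ 2) ^ 6 by ring, h]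
  norm_num

end NormalizedDFT

/-- C₆, C₉ and C₁₂ are K-invariant. -/
theorem C6_C9_C12_K_invariant :
    ∀ M ∈ K, ∀ x : Fin 3 → ℂ,
      C6 ((M : GL (Fin 3) ℂ).val.mulVec x 0) ((M : GL (Fin 3) ℂ).val.mulVec x 1)
          ((M : GL (Fin 3) ℂ).val.mulVec x 2) = C6 (x 0) (x 1) (x 2) ∧
      C9 ((M : GL (Fin 3) ℂ).val.mulVec x 0) ((M : GL (Fin 3) ℂ).val.mulVec x 1)
          ((M : GL (Fin 3) ℂ).val.mulVec x 2) = C9 (x 0) (x 1) (x 2) ∧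
      C12 ((M : GL (Fin 3) ℂ).val.mulVec x 0) ((M : GL (Fin 3) ℂ).val.mulVec x 1)
          ((M : GL (Fin 3) ℂ).val.mulVec x 2) = C12 (x 0) (x 1) (x 2) := by
  intro M hM x
  exact ⟨K_le_invariantGroup C6_eq_Q6 C6_cyclic C6_normalized_dft hM x,
    K_le_invariantGroup C9_eq_Q9 C9_cyclic C9_normalized_dft hM x,
    K_le_invariantGroup C12_eq_Q12 C12_cyclic C12_normalized_dft hM x⟩
end
end

section
/- For complex numbers b and c, the polynomial 27X⁸ − 18bX⁴ − 8cX² − b² ∈ ℂ[X] has a repeated complex root if and only if b = 0 or b³ = c² (its discriminant with respect to X is proportional to b²(b³−c²)⁴). -/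
open Polynomial

noncomputable section

/-- The polynomial 27X⁸ − 18bX⁴ − 8cX² − b² ∈ ℂ[X]. -/
def quarticPoly (b c : ℂ) : Polynomial ℂ :=
  C 27 * X ^ 8 - C (18 * b) * X ^ 4 - C (8 * c) * X ^ 2 - C (b ^ 2)

lemma quarticPoly_ne_zero (b c : ℂ) : quarticPoly b c ≠ 0 := by
  intro h
  have := congrArg (fun p => coeff p 8) h
  simp only [quarticPoly, coeff_sub, coeff_C_mul, coeff_X_pow, coeff_C, coeff_zero] at this
  norm_num at this

lemma quarticPoly_derivative (b c : ℂ) : (quarticPoly b c).derivative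
    = C 216 * X ^ 7 - C (72 * b) * X ^ 3 - C (16 * c) * X := by
  simp only [quarticPoly, derivative_sub, derivative_C_mul, derivative_X_pow, derivative_C,
    derivative_one]
  norm_num
  rw [show (216:ℂ) = 27*8 by norm_num, show (72:ℂ) = 18*4 by norm_num,
    show (16:ℂ) = 8*2 by norm_num, C_mul, C_mul, C_mul]
  ring

/-- 27X⁸ − 18bX⁴ − 8cX² − b² has a repeated complex root iff
b = 0 or b³ = c². -/
theorem quarticPoly_has_repeated_root_iff (b c : ℂ) :
    (∃ z : ℂ, 2 ≤ (quarticPoly b c).rootMultiplicity z) ↔ b = 0 ∨ b ^ 3 = c ^ 2 := by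
  constructor
  · rintro ⟨z, hz⟩
    have hd : (X - C z) ^ 2 ∣ quarticPoly b c :=
      (le_rootMultiplicity_iff (quarticPoly_ne_zero b c)).mp hz
    obtain ⟨g, hg⟩ := hd
    have h0 : (quarticPoly b c).eval z = 0 := by
      rw [hg]; simp
    have h1 : (quarticPoly b c).derivative.eval z = 0 := by
      rw [hg, derivative_mul, derivative_pow]; simp
    simp only [quarticPoly, eval_sub, eval_mul, eval_pow, eval_C, eval_X] at h0
    rw [quarticPoly_derivative] at h1
    simp only [eval_sub, eval_mul, eval_pow, eval_C, eval_X] at h1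
    rcases eq_or_ne z 0 with rfl | hz0
    · left
      have hb2 : b ^ 2 = 0 := by linear_combination -h0
      exact pow_eq_zero_iff (by norm_num) |>.mp hb2
    · right
      have h2 : z * (216 * z ^ 6 - 72 * b * z ^ 2 - 16 * c) = 0 := by linear_combination h1
      have hq : 216 * z ^ 6 - 72 * b * z ^ 2 - 16 * c = 0 :=
        (mul_eq_zero.mp h2).resolve_left hz0
      -- 48(b³−c²) = (108u²−48b)·q(u) − (27u³−21bu−6c)·q'(u) with u = z²
      linear_combination ((108 * z ^ 4 - 48 * b) / 48) * h0
        - ((27 * z ^ 6 - 21 * b * z ^ 2 - 6 * c) / 96) * hq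
  · intro h
    rcases eq_or_ne b 0 with rfl | hb0
    · refine ⟨0, (le_rootMultiplicity_iff (quarticPoly_ne_zero 0 c)).mpr ?_⟩
      refine ⟨C 27 * X ^ 6 - C (8 * c), ?_⟩
      simp only [quarticPoly, C_mul, C_pow, map_ofNat, C_0, C_neg]
      ring
    · have hbc : b ^ 3 = c ^ 2 := h.resolve_left hb0
      have hc0 : c ≠ 0 := by
        intro hc; apply hb0
        have : b ^ 3 = 0 := by rw [hbc, hc]; ring
        exact pow_eq_zero_iff (by norm_num) |>.mp this
      have hb2 : (c / b) ^ 2 = b := by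
        field_simp
        linear_combination -hbc
      have hc3 : (c / b) ^ 3 = c := by
        field_simp
        linear_combination -hbc
      obtain ⟨z, hz⟩ := IsAlgClosed.exists_pow_nat_eq (k := ℂ) (-(c / b) / 3) (n := 2)
        (by norm_num)
      have ht : c / b = -3 * z ^ 2 := by rw [hz]; ring
      have hb' : b = 9 * z ^ 4 := by rw [← hb2, ht]; ring
      have hc' : c = -27 * z ^ 6 := by rw [← hc3, ht]; ring
      refine ⟨z, (le_rootMultiplicity_iff (quarticPoly_ne_zero b c)).mpr ?_⟩
      refine ⟨C 27 * (X - C z) * (X + C z) ^ 3 * (X ^ 2 + C (3 * z ^ 2)), ?_⟩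
      rw [hb', hc']
      simp only [quarticPoly, C_mul, C_pow, C_neg, map_ofNat]
      ring
end
end
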